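/- arXiv:2305.04155 — 4 statements merged into one kernel-verified Lean document; each statement's English description precedes it below -/
import Mathlib

section
/- Let 0 < λ < μ. Let (A_i)_{i≥1} and (S_i)_{i≥1} be mutually independent sequences of i.i.d. random variables, where each A_i is exponentially distributed with rate λ and each S_i is exponentially distributed with rate μ. Then for every positive integer l, the probability that the random walk of partial sums stays negative up to time l satisfies P( ∑_{i=1}^k (A_i − S_i) < 0 for all k = 1, …, l ) ≤ (4λμ/(λ+μ)²)^l. (In queueing terms: the number of arrivals J(Ṫ_b) in a typical busy period of an M/M/1 queue with arrival rate λ and service rate μ satisfies P(J(Ṫ_b) > l) ≤ (λμ/((λ+μ)/2)²)^l.) -/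
open MeasureTheory ProbabilityTheory Real Set

lemma exp_mul_indicator_eq {r t : ℝ} (hr : 0 ≤ r) :
    (fun x => exp (t * x) * (exponentialPDF r x).toReal)
      = Set.indicator (Ici 0) (fun x => r * exp (-((r - t) * x))) := by
  funext x
  rw [exponentialPDF_eq, ENNReal.toReal_ofReal (by split <;> positivity)]
  by_cases hx : 0 ≤ x
  · rw [if_pos hx, Set.indicator_of_mem (mem_Ici.mpr hx)]
    rw [mul_comm, mul_assoc, ← exp_add]
    ring_nf
  · rw [if_neg hx, Set.indicator_of_notMem (by simpa using hx)]
    simp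

lemma integrable_exp_mul_expMeasure {r t : ℝ} (hr : 0 < r) (ht : t < r) :
    Integrable (fun x => exp (t * x)) (expMeasure r) := by
  have hb : 0 < r - t := by linarith
  have hmeas : Measurable (exponentialPDF r) :=
    (measurable_exponentialPDFReal r).ennreal_ofReal
  have hm : expMeasure r = volume.withDensity (exponentialPDF r) := rfl
  rw [hm, integrable_withDensity_iff hmeas
    (Filter.Eventually.of_forall fun x => ENNReal.ofReal_lt_top)]
  rw [exp_mul_indicator_eq hr.le, integrable_indicator_iff measurableSet_Ici]
  rw [IntegrableOn, Measure.restrict_congr_set Ioi_ae_eq_Ici.symm]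
  have := (exp_neg_integrableOn_Ioi 0 hb).const_mul r
  simpa only [neg_mul] using this

lemma integral_exp_mul_expMeasure {r t : ℝ} (hr : 0 < r) (ht : t < r) :
    ∫ x, exp (t * x) ∂(expMeasure r) = r / (r - t) := by
  have hb : 0 < r - t := by linarith
  have hmeas : Measurable fun x => (exponentialPDFReal r x).toNNReal :=
    (measurable_exponentialPDFReal r).real_toNNReal
  have hm : expMeasure r
      = volume.withDensity fun x => ((exponentialPDFReal r x).toNNReal : ENNReal) := rfl
  rw [hm, integral_withDensity_eq_integral_smul hmeas]
  have heq : (fun x => (exponentialPDFReal r x).toNNReal • exp (t * x))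
      = Set.indicator (Ici 0) (fun x => r * exp (-((r - t) * x))) := by
    rw [← exp_mul_indicator_eq hr.le]
    funext x
    rw [NNReal.smul_def, smul_eq_mul, mul_comm,
      Real.coe_toNNReal _ (exponentialPDFReal_nonneg hr x)]
    congr 1
    rw [exponentialPDF, ENNReal.toReal_ofReal (exponentialPDFReal_nonneg hr x)]
  rw [heq, integral_indicator measurableSet_Ici,
    integral_Ici_eq_integral_Ioi, integral_const_mul]
  have h2 := integral_comp_mul_left_Ioi (fun y => exp (-y)) 0 hb
  simp only [mul_zero, smul_eq_mul] at h2
  rw [h2, integral_exp_neg_Ioi_zero]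
  field_simp

lemma integrable_exp_mul_of_map {Ω : Type*} [MeasurableSpace Ω] {P : Measure Ω}
    {X : Ω → ℝ} (hX : Measurable X) {r t : ℝ} (hmap : P.map X = expMeasure r)
    (hr : 0 < r) (ht : t < r) :
    Integrable (fun ω => exp (t * X ω)) P := by
  have h : Integrable (fun x => exp (t * x)) (P.map X) := by
    rw [hmap]; exact integrable_exp_mul_expMeasure hr ht
  exact (integrable_map_measure ((measurable_const_mul t).exp.aestronglyMeasurable)
    hX.aemeasurable).mp h

lemma mgf_of_map {Ω : Type*} [MeasurableSpace Ω] {P : Measure Ω}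
    {X : Ω → ℝ} (hX : Measurable X) {r t : ℝ} (hmap : P.map X = expMeasure r)
    (hr : 0 < r) (ht : t < r) :
    mgf X P t = r / (r - t) := by
  rw [mgf, ← integral_map hX.aemeasurable
    ((measurable_const_mul t).exp.aestronglyMeasurable), hmap,
    integral_exp_mul_expMeasure hr ht]

/-- For an M/M/1 queue with arrival rate `lam` and service rate `mu`
(`0 < lam < mu`), with mutually independent i.i.d. exponential inter-arrival times `A i ~ Exp lam`
and service times `S i ~ Exp mu`, the probability that the partial sums
`∑_{i=1}^k (A i - S i)` stay negative for all `k = 1, …, l` (i.e. that the number of arrivals in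
a typical busy period exceeds `l`) is at most `(4 lam mu / (lam + mu)^2)^l`. -/
theorem busy_period_arrivals_bound
    {Ω : Type*} [MeasurableSpace Ω] (P : Measure Ω) [IsProbabilityMeasure P]
    (lam mu : ℝ) (hlam : 0 < lam) (hlammu : lam < mu)
    (A S : ℕ → Ω → ℝ)
    (hAmeas : ∀ i, Measurable (A i)) (hSmeas : ∀ i, Measurable (S i))
    (hindep : iIndepFun (Sum.elim A S) P)
    (hAlaw : ∀ i, 1 ≤ i → P.map (A i) = expMeasure lam)
    (hSlaw : ∀ i, 1 ≤ i → P.map (S i) = expMeasure mu)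
    (l : ℕ) (hl : 0 < l) :
    P {ω | ∀ k ∈ Finset.Icc 1 l, ∑ i ∈ Finset.Icc 1 k, (A i ω - S i ω) < 0}
      ≤ ENNReal.ofReal ((4 * lam * mu / (lam + mu) ^ 2) ^ l) := by
  have hmu : 0 < mu := hlam.trans hlammu
  set t : ℝ := (mu - lam) / 2 with ht_def
  have ht0 : 0 ≤ t := by simp only [ht_def]; linarith
  have htmu : t < mu := by simp only [ht_def]; linarith
  have htlam : -t < lam := by simp only [ht_def]; linarith
  -- the random variables `Z (inl i) = -A i`, `Z (inr i) = S i`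
  set Z : ℕ ⊕ ℕ → Ω → ℝ := Sum.elim (fun i => -A i) S with hZ_def
  have hZmeas : ∀ j, Measurable (Z j) := by
    rintro (i | i)
    · exact (hAmeas i).neg
    · exact hSmeas i
  have hZindep : iIndepFun Z P := by
    have h := hindep.comp
      (Sum.elim (fun _ : ℕ => (Neg.neg : ℝ → ℝ)) (fun _ : ℕ => (id : ℝ → ℝ)))
      (by rintro (i | i); exacts [measurable_neg, measurable_id])
    convert h using 1
    funext j
    cases j <;> rfl
  set s : Finset (ℕ ⊕ ℕ) := (Finset.Icc 1 l).disjSum (Finset.Icc 1 l) with hs_def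
  set Y : Ω → ℝ := ∑ j ∈ s, Z j with hY_def
  have hYval : ∀ ω, Y ω = ∑ i ∈ Finset.Icc 1 l, (S i ω - A i ω) := by
    intro ω
    rw [hY_def, Finset.sum_apply, hs_def, Finset.sum_disjSum]
    simp only [hZ_def, Sum.elim_inl, Sum.elim_inr, Pi.neg_apply]
    rw [Finset.sum_sub_distrib, Finset.sum_neg_distrib]
    ring
  -- event inclusion
  have hsub : {ω | ∀ k ∈ Finset.Icc 1 l, ∑ i ∈ Finset.Icc 1 k, (A i ω - S i ω) < 0}
      ⊆ {ω | (0 : ℝ) ≤ Y ω} := by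
    intro ω hω
    have hk := hω l (Finset.mem_Icc.mpr ⟨hl, le_rfl⟩)
    have : Y ω = -∑ i ∈ Finset.Icc 1 l, (A i ω - S i ω) := by
      rw [hYval ω, ← Finset.sum_neg_distrib]
      congr 1; funext i; ring
    rw [Set.mem_setOf_eq, this]
    linarith
  -- integrability of exp(t * Z j)
  have hint : ∀ j ∈ s, Integrable (fun ω => exp (t * Z j ω)) P := by
    rintro (i | i) hj
    · rw [hs_def, Finset.inl_mem_disjSum, Finset.mem_Icc] at hj
      have h := integrable_exp_mul_of_map (hAmeas i) (hAlaw i hj.1) hlam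
        (htlam.trans_le (le_refl lam))
      simpa only [hZ_def, Sum.elim_inl, Pi.neg_apply, mul_neg, neg_mul] using h
    · rw [hs_def, Finset.inr_mem_disjSum, Finset.mem_Icc] at hj
      simpa only [hZ_def, Sum.elim_inr] using
        integrable_exp_mul_of_map (hSmeas i) (hSlaw i hj.1) (hlam.trans hlammu) htmu
  have h_int_sum : Integrable (fun ω => exp (t * Y ω)) P :=
    hZindep.integrable_exp_mul_sum hZmeas hint
  -- Chernoff bound
  have hchernoff := measure_ge_le_exp_mul_mgf (X := Y) (μ := P) 0 ht0 h_int_sum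
  simp only [mul_zero, neg_zero, exp_zero, one_mul] at hchernoff
  -- compute mgf
  have hmgf : mgf Y P t = (4 * lam * mu / (lam + mu) ^ 2) ^ l := by
    rw [hY_def, hZindep.mgf_sum hZmeas, hs_def, Finset.prod_disjSum]
    have h1 : ∀ i ∈ Finset.Icc 1 l, mgf (Z (Sum.inl i)) P t = lam / (lam + t) := by
      intro i hi
      rw [Finset.mem_Icc] at hi
      have : Z (Sum.inl i) = -(A i) := rfl
      rw [this, mgf_neg, mgf_of_map (hAmeas i) (hAlaw i hi.1) hlam
        (by linarith : -t < lam)]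
      ring_nf
    have h2 : ∀ i ∈ Finset.Icc 1 l, mgf (Z (Sum.inr i)) P t = mu / (mu - t) := by
      intro i hi
      rw [Finset.mem_Icc] at hi
      exact mgf_of_map (hSmeas i) (hSlaw i hi.1) (hlam.trans hlammu) htmu
    rw [Finset.prod_congr rfl h1, Finset.prod_congr rfl h2,
      Finset.prod_const, Finset.prod_const, Nat.card_Icc]
    simp only [Nat.add_sub_cancel]
    rw [← mul_pow]
    congr 1
    have h3 : lam + t = (lam + mu) / 2 := by rw [ht_def]; ring
    have h4 : mu - t = (lam + mu) / 2 := by rw [ht_def]; ring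
    rw [h3, h4]
    have : lam + mu ≠ 0 := by positivity
    field_simp
    ring
  -- assemble
  refine le_trans (measure_mono hsub) ?_
  rw [ENNReal.le_ofReal_iff_toReal_le (measure_ne_top _ _) (by positivity)]
  calc (P {ω | 0 ≤ Y ω}).toReal ≤ mgf Y P t := hchernoff
    _ = (4 * lam * mu / (lam + mu) ^ 2) ^ l := hmgf
end

section
/- Let (Ω, ℱ, P) be a probability space and let A, B, R be events with P(R) > 0 and P(Rᶜ) > 0. Suppose A and B are conditionally independent given R, i.e., P(A ∩ B ∩ R)·P(R) = P(A ∩ R)·P(B ∩ R), and suppose the conditional laws given R match the unconditional ones on A and B in the sense that P(A | R) = P(A) and P(B | R) = P(B). Then |P(A ∩ B) − P(A)·P(B)| ≤ 3·P(Rᶜ). -/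
open MeasureTheory

/- On `R` the event `A ∩ B` has probability exactly `P(A) P(B) P(R)`, so `P(A ∩ B) - P(A) P(B)`
is the difference of two numbers in `[0, P(Rᶜ)]`: `P((A ∩ B) \ R)` and `P(A) P(B) P(Rᶜ)`. The
bound thus holds even with constant `1`. -/

lemma measureReal_inter_inter_eq_mul_mul_of_condIndep {Ω : Type*} [MeasurableSpace Ω]
    (P : Measure Ω) {A B R : Set Ω} (hRpos : 0 < P.real R)
    (hcondindep : P.real (A ∩ B ∩ R) * P.real R = P.real (A ∩ R) * P.real (B ∩ R))
    (hAR : P.real (A ∩ R) = P.real A * P.real R) (hBR : P.real (B ∩ R) = P.real B * P.real R) :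
    P.real (A ∩ B ∩ R) = P.real A * P.real B * P.real R :=
  mul_right_cancel₀ hRpos.ne' (by rw [hcondindep, hAR, hBR]; ring)

lemma abs_measureReal_inter_sub_mul_le_of_condIndep {Ω : Type*} [MeasurableSpace Ω]
    (P : Measure Ω) [IsProbabilityMeasure P] {A B R : Set Ω} (hR : MeasurableSet R)
    (hRpos : 0 < P.real R)
    (hcondindep : P.real (A ∩ B ∩ R) * P.real R = P.real (A ∩ R) * P.real (B ∩ R))
    (hAR : P.real (A ∩ R) = P.real A * P.real R) (hBR : P.real (B ∩ R) = P.real B * P.real R) :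
    |P.real (A ∩ B) - P.real A * P.real B| ≤ P.real Rᶜ := by
  have hsplit : P.real (A ∩ B ∩ R) + P.real ((A ∩ B) \ R) = P.real (A ∩ B) :=
    measureReal_inter_add_sdiff hR
  have hinside := measureReal_inter_inter_eq_mul_mul_of_condIndep P hRpos hcondindep hAR hBR
  have houtside : P.real ((A ∩ B) \ R) ≤ P.real Rᶜ := measureReal_mono fun _ hx ↦ hx.2
  have hcompl : P.real Rᶜ = 1 - P.real R := probReal_compl_eq_one_sub hR
  have hprod_le_one : P.real A * P.real B ≤ 1 :=
    mul_le_one₀ measureReal_le_one measureReal_nonneg measureReal_le_one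
  calc |P.real (A ∩ B) - P.real A * P.real B|
      = |P.real ((A ∩ B) \ R) - P.real A * P.real B * P.real Rᶜ| := by
        congr 1; rw [← hsplit, hinside, hcompl]; ring
    _ ≤ P.real Rᶜ :=
      abs_sub_le_of_nonneg_of_le measureReal_nonneg houtside
        (mul_nonneg (mul_nonneg measureReal_nonneg measureReal_nonneg) measureReal_nonneg)
        (mul_le_of_le_one_left measureReal_nonneg hprod_le_one)

theorem delta_independence_from_renewal_general
    {Ω : Type*} [MeasurableSpace Ω] (P : Measure Ω) [IsProbabilityMeasure P]
    (A B R : Set Ω)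
    (hR : MeasurableSet R)
    (hRpos : 0 < P R)
    (hcondindep : (P (A ∩ B ∩ R)).toReal * (P R).toReal
      = (P (A ∩ R)).toReal * (P (B ∩ R)).toReal)
    (hAR : (P (A ∩ R)).toReal / (P R).toReal = (P A).toReal)
    (hBR : (P (B ∩ R)).toReal / (P R).toReal = (P B).toReal) :
    |(P (A ∩ B)).toReal - (P A).toReal * (P B).toReal| ≤ 3 * (P Rᶜ).toReal := by
  simp only [← measureReal_def] at hcondindep hAR hBR ⊢
  have hRpos' : 0 < P.real R := ENNReal.toReal_pos hRpos.ne' (measure_ne_top P R)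
  have hsharp := abs_measureReal_inter_sub_mul_le_of_condIndep P hR hRpos' hcondindep
    ((div_eq_iff hRpos'.ne').mp hAR) ((div_eq_iff hRpos'.ne').mp hBR)
  linarith [measureReal_nonneg (μ := P) (s := Rᶜ)]

/-- If events `A`, `B` are conditionally independent given an event `R` with
`P(R) > 0`, `P(Rᶜ) > 0`, and the conditional laws given `R` agree with the unconditional ones on
`A` and `B` (`P(A|R) = P(A)`, `P(B|R) = P(B)`), then
`|P(A ∩ B) - P(A)·P(B)| ≤ 3·P(Rᶜ)`. -/
theorem delta_independence_from_renewal
    {Ω : Type*} [MeasurableSpace Ω] (P : Measure Ω) [IsProbabilityMeasure P]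
    (A B R : Set Ω)
    (hA : MeasurableSet A) (hB : MeasurableSet B) (hR : MeasurableSet R)
    (hRpos : 0 < P R) (hRcpos : 0 < P Rᶜ)
    (hcondindep : (P (A ∩ B ∩ R)).toReal * (P R).toReal
      = (P (A ∩ R)).toReal * (P (B ∩ R)).toReal)
    (hAR : (P (A ∩ R)).toReal / (P R).toReal = (P A).toReal)
    (hBR : (P (B ∩ R)).toReal / (P R).toReal = (P B).toReal) :
    |(P (A ∩ B)).toReal - (P A).toReal * (P B).toReal| ≤ 3 * (P Rᶜ).toReal :=
  delta_independence_from_renewal_general P A B R hR hRpos hcondindep hAR hBR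
end

section
/- Let A, B, C be {0,1}-valued random variables on a common probability space, let 0 < ξ < 1 and δ > 0, and suppose: (i) P(A = 1, B = 0) = P(B = 1, C = 0); (ii) |P(A = 1, C = 1) − P(A = 1)·P(C = 1)| ≤ δ (δ-independence of A and C); (iii) P(C = 1) = P(A = 1); (iv) ξ < P(A = 1) < 1 − ξ; and (v) δ ≤ ξ³. Then P(A = 1, B = 0) ≥ ξ²(1 − ξ)/2. -/
/-!
Write `p = P(A = 1) = P(C = 1)`. Splitting `{A = 1}` along `C` and using δ-independence gives
`P(A = 1, C = 0) ≥ p - p² - δ`, while `{A = 1, C = 0} ⊆ {A = 1, B = 0} ∪ {B = 1, C = 0}` and (i) give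
`P(A = 1, C = 0) ≤ 2 P(A = 1, B = 0)`. Since `ξ < p < 1 - ξ`, `p (1 - p) ≥ ξ (1 - ξ)`, and
`ξ (1 - ξ) - ξ³ ≥ ξ² (1 - ξ)` because `ξ < 1/2`.
-/

open MeasureTheory

theorem ZMod.two_eq_zero_iff_ne_one (x : ZMod 2) : x = 0 ↔ x ≠ 1 := by
  revert x; decide

theorem setOf_eq_one_and_eq_zero {Ω : Type*} (X Y : Ω → ZMod 2) :
    {ω | X ω = 1 ∧ Y ω = 0} = {ω | X ω = 1} \ {ω | Y ω = 1} := by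
  ext ω
  simp only [Set.mem_ofPred_eq, Set.mem_sdiff, ZMod.two_eq_zero_iff_ne_one]

section MeasureReal

variable {Ω : Type*} [MeasurableSpace Ω] (μ : Measure Ω)

theorem measureReal_le_inter_add_sdiff (s t : Set Ω) :
    μ.real s ≤ μ.real (s ∩ t) + μ.real (s \ t) := by
  simpa only [Set.inter_union_sdiff] using measureReal_union_le (μ := μ) (s ∩ t) (s \ t)

theorem measureReal_sdiff_le_sdiff_add_sdiff [IsFiniteMeasure μ] (s t u : Set Ω) :
    μ.real (s \ u) ≤ μ.real (s \ t) + μ.real (t \ u) :=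
  (measureReal_mono (sdiff_triangle s t u)).trans (measureReal_union_le _ _)

end MeasureReal

theorem mul_one_sub_le_mul_one_sub {ξ p : ℝ} (hξp : ξ ≤ p) (hp : p ≤ 1 - ξ) :
    ξ * (1 - ξ) ≤ p * (1 - p) := by
  nlinarith [mul_nonneg (sub_nonneg.2 hξp) (sub_nonneg.2 hp)]

theorem polarization_difference_step_lower_bound_general
    {Ω : Type*} [MeasurableSpace Ω] (P : Measure Ω) [IsProbabilityMeasure P]
    (A B C : Ω → ZMod 2)
    (ξ δ : ℝ) (hξ0 : 0 < ξ)
    (h1 : (P {ω | A ω = 1 ∧ B ω = 0}).toReal = (P {ω | B ω = 1 ∧ C ω = 0}).toReal)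
    (h2 : |(P {ω | A ω = 1 ∧ C ω = 1}).toReal
        - (P {ω | A ω = 1}).toReal * (P {ω | C ω = 1}).toReal| ≤ δ)
    (h3 : (P {ω | C ω = 1}).toReal = (P {ω | A ω = 1}).toReal)
    (h4 : ξ < (P {ω | A ω = 1}).toReal)
    (h5 : (P {ω | A ω = 1}).toReal < 1 - ξ)
    (h6 : δ ≤ ξ ^ 3) :
    ξ ^ 2 * (1 - ξ) / 2 ≤ (P {ω | A ω = 1 ∧ B ω = 0}).toReal := by
  simp only [← measureReal_def, setOf_eq_one_and_eq_zero, Set.ofPred_and, h3] at *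
  set p := P.real {ω | A ω = 1}
  have hsplit := measureReal_le_inter_add_sdiff P {ω | A ω = 1} {ω | C ω = 1}
  have htriangle :=
    measureReal_sdiff_le_sdiff_add_sdiff P {ω | A ω = 1} {ω | B ω = 1} {ω | C ω = 1}
  have hcorr := (abs_le.1 h2).2
  have hvar := mul_one_sub_le_mul_one_sub h4.le h5.le
  calc ξ ^ 2 * (1 - ξ) / 2 ≤ (ξ * (1 - ξ) - ξ ^ 3) / 2 := by
        nlinarith [mul_nonneg hξ0.le (by linarith : (0 : ℝ) ≤ 1 - 2 * ξ)]
    _ ≤ (p * (1 - p) - δ) / 2 := by linarith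
    _ ≤ P.real ({ω | A ω = 1} \ {ω | C ω = 1}) / 2 := by linarith
    _ ≤ P.real ({ω | A ω = 1} \ {ω | B ω = 1}) := by linarith

/-- For `{0,1}`-valued random variables `A`, `B`, `C` with
`P(A=1,B=0) = P(B=1,C=0)`, `A` and `C` δ-independent, `P(C=1) = P(A=1)`,
`ξ < P(A=1) < 1 - ξ` and `δ ≤ ξ³`, one has `P(A=1,B=0) ≥ ξ²(1-ξ)/2`. -/
theorem polarization_difference_step_lower_bound
    {Ω : Type*} [MeasurableSpace Ω] (P : Measure Ω) [IsProbabilityMeasure P]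
    (A B C : Ω → ZMod 2)
    (hA : Measurable A) (hB : Measurable B) (hC : Measurable C)
    (ξ δ : ℝ) (hξ0 : 0 < ξ) (hξ1 : ξ < 1) (hδ : 0 < δ)
    (h1 : (P {ω | A ω = 1 ∧ B ω = 0}).toReal = (P {ω | B ω = 1 ∧ C ω = 0}).toReal)
    (h2 : |(P {ω | A ω = 1 ∧ C ω = 1}).toReal
        - (P {ω | A ω = 1}).toReal * (P {ω | C ω = 1}).toReal| ≤ δ)
    (h3 : (P {ω | C ω = 1}).toReal = (P {ω | A ω = 1}).toReal)
    (h4 : ξ < (P {ω | A ω = 1}).toReal)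
    (h5 : (P {ω | A ω = 1}).toReal < 1 - ξ)
    (h6 : δ ≤ ξ ^ 3) :
    ξ ^ 2 * (1 - ξ) / 2 ≤ (P {ω | A ω = 1 ∧ B ω = 0}).toReal :=
  polarization_difference_step_lower_bound_general P A B C ξ δ hξ0 h1 h2 h3 h4 h5 h6
end

section
/- Let μ, κ > 0 and define f : (0, μ) → ℝ by f(λ) = λ(μ − λ)/(κ + μ − λ) (the capacity in bits per second of the erasure queue-channel with exponential decoherence parameter κ over a stationary M/M/1 queue with service rate μ). Then λ* = (κ + μ) − √(κ(κ + μ)) lies in the open interval (0, μ), f attains its maximum over (0, μ) at λ = λ*, and the maximum value is f(λ*) = (√(κ + μ) − √κ)². In particular, for μ = 1 and κ = 0.1, λ* = 1.1 − √0.11 ≈ 0.77 and f(λ*) ≈ 0.54. -/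
/-! Substituting `d = κ + μ - λ`, the capacity becomes `λ(μ - λ)/d = (2κ + μ) - (d + κ(κ + μ)/d)`,
so maximising it over `λ ∈ (0, μ)` means minimising `d + κ(κ + μ)/d` over `d ∈ (κ, κ + μ)`.
By AM-GM the minimum is `2√(κ(κ + μ))`, attained at `d = √(κ(κ + μ))`, which lies in that interval;
this is `λ = λ*`, and `2κ + μ - 2√(κ(κ + μ)) = (√(κ + μ) - √κ)²`. -/

open Real

lemma two_sqrt_le_add_div {a d : ℝ} (ha : 0 ≤ a) (hd : 0 < d) : 2 * √a ≤ d + a / d := by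
  have hsq : (√a) ^ 2 = a := sq_sqrt ha
  rw [← sub_nonneg, show d + a / d - 2 * √a = (d - √a) ^ 2 / d by field_simp; linear_combination -hsq]
  positivity

lemma sqrt_add_div_sqrt {a : ℝ} : √a + a / √a = 2 * √a := by
  rw [div_sqrt]; ring

lemma mul_sub_div_eq_sub {mu kappa lam : ℝ} (hd : kappa + mu - lam ≠ 0) :
    lam * (mu - lam) / (kappa + mu - lam) =
      2 * kappa + mu - ((kappa + mu - lam) + kappa * (kappa + mu) / (kappa + mu - lam)) := by
  field_simp
  ring

lemma sub_sqrt_sq {a b : ℝ} (ha : 0 ≤ a) (hb : 0 ≤ b) :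
    (√a - √b) ^ 2 = a + b - 2 * √(b * a) := by
  rw [sub_sq, sq_sqrt ha, sq_sqrt hb, sqrt_mul hb]
  ring

lemma sqrt_mul_add_mem_Ioo {mu kappa : ℝ} (hmu : 0 < mu) (hkappa : 0 < kappa) :
    √(kappa * (kappa + mu)) ∈ Set.Ioo kappa (kappa + mu) := by
  constructor
  · rw [lt_sqrt hkappa.le]; nlinarith
  · rw [sqrt_lt' (by linarith)]; nlinarith

lemma sqrt_0_11_mem_Ioo : √0.11 ∈ Set.Ioo (0.33 : ℝ) 0.335 :=
  ⟨(lt_sqrt (by norm_num)).2 (by norm_num), (sqrt_lt' (by norm_num)).2 (by norm_num)⟩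

/-- **Statement 12.** For `mu, kappa > 0`, the capacity function
`f lam = lam (mu - lam) / (kappa + mu - lam)` of the erasure queue-channel over a stationary
M/M/1 queue attains its maximum over the admissible arrival rates `lam ∈ (0, mu)` at
`lam* = (kappa + mu) - √(kappa (kappa + mu)) ∈ (0, mu)`, with maximum value
`f lam* = (√(kappa + mu) - √kappa)²`. In particular, for `mu = 1` and `kappa = 0.1`,
`lam* = 1.1 - √0.11 ≈ 0.77` and `f lam* ≈ 0.54`. -/
theorem eqc_optimal_arrival_rate
    (mu kappa : ℝ) (hmu : 0 < mu) (hkappa : 0 < kappa)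
    (f : ℝ → ℝ) (hf : ∀ lam, f lam = lam * (mu - lam) / (kappa + mu - lam))
    (lamstar : ℝ) (hstar : lamstar = (kappa + mu) - Real.sqrt (kappa * (kappa + mu))) :
    lamstar ∈ Set.Ioo 0 mu ∧
    (∀ lam ∈ Set.Ioo (0 : ℝ) mu, f lam ≤ f lamstar) ∧
    f lamstar = (Real.sqrt (kappa + mu) - Real.sqrt kappa) ^ 2 ∧
    (mu = 1 → kappa = 0.1 →
      lamstar = 1.1 - Real.sqrt 0.11 ∧ |lamstar - 0.77| < 0.01 ∧ |f lamstar - 0.54| < 0.01) := by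
  set s := √(kappa * (kappa + mu)) with hs
  obtain ⟨hks, hsc⟩ := sqrt_mul_add_mem_Ioo hmu hkappa
  have hd : kappa + mu - lamstar = s := by rw [hstar]; ring
  have hpeak : f lamstar = 2 * kappa + mu - 2 * s := by
    rw [hf, mul_sub_div_eq_sub (by linarith), hd, sqrt_add_div_sqrt]
  have hvalue : f lamstar = (√(kappa + mu) - √kappa) ^ 2 := by
    rw [hpeak, sub_sqrt_sq (by linarith) hkappa.le]; ring
  refine ⟨⟨by linarith, by linarith⟩, fun lam hlam => ?_, hvalue, fun hmu1 hkappa1 => ?_⟩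
  · rw [hf, mul_sub_div_eq_sub (by linarith [hlam.2]), hpeak]
    linarith [two_sqrt_le_add_div (by positivity : 0 ≤ kappa * (kappa + mu))
      (by linarith [hlam.2] : 0 < kappa + mu - lam)]
  · subst hmu1 hkappa1
    have hs011 : s = √0.11 := by norm_num [hs]
    obtain ⟨hlo, hhi⟩ := sqrt_0_11_mem_Ioo
    refine ⟨by rw [hstar, hs011]; norm_num, ?_, ?_⟩ <;>
      rw [abs_lt] <;> constructor <;> linarith
end
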